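/- arXiv:1604.02763 — 5 statements merged into one kernel-verified Lean document; each statement's English description precedes it below -/
import Mathlib

section
/- If A = C*D and B = D*C, then the homomorphism induced by Cᵗ from ℤᴺ/(id − Aᵗ)ℤᴺ to ℤᴹ/(id − Bᵗ)ℤᴹ is an isomorphism, with inverse induced by Dᵗ. -/
open Submodule

lemma aux_range_le (n m : ℕ) (P : Matrix (Fin m) (Fin n) ℤ)
    (X : Matrix (Fin n) (Fin n) ℤ) (Y : Matrix (Fin m) (Fin m) ℤ)
    (h : P * X = Y * P) :
    LinearMap.range X.mulVecLin ≤
      LinearMap.ker ((LinearMap.range Y.mulVecLin).mkQ.comp P.mulVecLin) := by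
  rintro x ⟨v, rfl⟩
  simp only [LinearMap.mem_ker, LinearMap.comp_apply]
  rw [Submodule.mkQ_apply, Submodule.Quotient.mk_eq_zero]
  refine ⟨P.mulVec v, ?_⟩
  simp only [Matrix.mulVecLin_apply]
  rw [Matrix.mulVec_mulVec, Matrix.mulVec_mulVec, h]

/-- If `A = C * D` and `B = D * C`, the homomorphism induced by `Cᵗ` from
`ℤᴺ/(id - Aᵗ)ℤᴺ` to `ℤᴹ/(id - Bᵗ)ℤᴹ` is an isomorphism, with inverse induced by `Dᵗ`. -/
theorem stmt_2 (N M : ℕ) (C : Matrix (Fin N) (Fin M) ℤ) (D : Matrix (Fin M) (Fin N) ℤ)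
    (A : Matrix (Fin N) (Fin N) ℤ) (B : Matrix (Fin M) (Fin M) ℤ)
    (hA : A = C * D) (hB : B = D * C) :
    ∃ (φ : ((Fin N → ℤ) ⧸ LinearMap.range (1 - A.transpose).mulVecLin) →ₗ[ℤ]
           ((Fin M → ℤ) ⧸ LinearMap.range (1 - B.transpose).mulVecLin))
      (ψ : ((Fin M → ℤ) ⧸ LinearMap.range (1 - B.transpose).mulVecLin) →ₗ[ℤ]
           ((Fin N → ℤ) ⧸ LinearMap.range (1 - A.transpose).mulVecLin)),
      (∀ v : Fin N → ℤ,
        φ (Submodule.Quotient.mk v) = Submodule.Quotient.mk (C.transpose.mulVecLin v)) ∧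
      (∀ w : Fin M → ℤ,
        ψ (Submodule.Quotient.mk w) = Submodule.Quotient.mk (D.transpose.mulVecLin w)) ∧
      φ.comp ψ = LinearMap.id ∧ ψ.comp φ = LinearMap.id := by
  have hC : C.transpose * (1 - A.transpose) = (1 - B.transpose) * C.transpose := by
    subst hA hB
    simp [Matrix.mul_sub, Matrix.sub_mul, Matrix.transpose_mul, Matrix.mul_assoc]
  have hD : D.transpose * (1 - B.transpose) = (1 - A.transpose) * D.transpose := by
    subst hA hB
    simp [Matrix.mul_sub, Matrix.sub_mul, Matrix.transpose_mul, Matrix.mul_assoc]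
  set RA := LinearMap.range (1 - A.transpose).mulVecLin
  set RB := LinearMap.range (1 - B.transpose).mulVecLin
  refine ⟨RA.liftQ (RB.mkQ.comp C.transpose.mulVecLin)
      (aux_range_le N M C.transpose _ _ hC),
    RB.liftQ (RA.mkQ.comp D.transpose.mulVecLin)
      (aux_range_le M N D.transpose _ _ hD), fun v => rfl, fun w => rfl, ?_, ?_⟩
  · apply Submodule.linearMap_qext
    refine LinearMap.ext fun w => ?_
    simp only [LinearMap.comp_apply, Submodule.mkQ_apply, Submodule.liftQ_apply,
      LinearMap.id_apply]
    rw [Submodule.Quotient.eq]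
    refine ⟨-w, ?_⟩
    simp only [Matrix.mulVecLin_apply, Matrix.sub_mulVec, Matrix.one_mulVec,
      Matrix.mulVec_neg]
    rw [Matrix.mulVec_mulVec, ← Matrix.transpose_mul, ← hB]
    abel
  · apply Submodule.linearMap_qext
    refine LinearMap.ext fun v => ?_
    simp only [LinearMap.comp_apply, Submodule.mkQ_apply, Submodule.liftQ_apply,
      LinearMap.id_apply]
    rw [Submodule.Quotient.eq]
    refine ⟨-v, ?_⟩
    simp only [Matrix.mulVecLin_apply, Matrix.sub_mulVec, Matrix.one_mulVec,
      Matrix.mulVec_neg]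
    rw [Matrix.mulVec_mulVec, ← Matrix.transpose_mul, ← hA]
    abel
end

section
/- If A = R*S for an N×K nonnegative integer matrix R and a K×N nonnegative integer matrix S such that every column of R has column sum 1 (i.e., for each k there is a unique i with R(i,k) = 1 and all other entries of that column are 0), then for each j, the sum over i of Aᵗ(j,i) equals the sum over k of Sᵗ(j,k); consequently the map induced by Sᵗ on the quotient ℤᴷ/(id − (S*R)ᵗ)ℤᴷ → ℤᴺ/(id − Aᵗ)ℤᴺ sends the class of the all-ones vector to the class of the all-ones vector. -/
/-- If `A = R * S` where every column of the `{0,1}`-matrix `R` has column sum `1` and `S` is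
nonnegative, then for each `j`, `∑ i, Aᵗ(j,i) = ∑ k, Sᵗ(j,k)`; consequently the map induced
by `Sᵗ` on `ℤᴷ/(id - (S*R)ᵗ)ℤᴷ → ℤᴺ/(id - Aᵗ)ℤᴺ` sends the class of the all-ones vector to
the class of the all-ones vector. -/
theorem stmt_3 (N K : ℕ) (R : Matrix (Fin N) (Fin K) ℤ) (S : Matrix (Fin K) (Fin N) ℤ)
    (hR01 : ∀ i k, R i k = 0 ∨ R i k = 1)
    (hRcol : ∀ k, ∑ i, R i k = 1)
    (hS : ∀ k j, 0 ≤ S k j)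
    (A : Matrix (Fin N) (Fin N) ℤ) (hA : A = R * S) :
    (∀ j, ∑ i, A.transpose j i = ∑ k, S.transpose j k) ∧
    ((Submodule.Quotient.mk (S.transpose.mulVecLin (fun _ => 1)) :
        (Fin N → ℤ) ⧸ LinearMap.range (1 - A.transpose).mulVecLin) =
      Submodule.Quotient.mk (fun _ => 1)) := by
  have key : ∀ j, ∑ i, A.transpose j i = ∑ k, S.transpose j k := by
    intro j
    simp only [Matrix.transpose_apply, hA, Matrix.mul_apply]
    rw [Finset.sum_comm]
    refine Finset.sum_congr rfl fun k _ => ?_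
    rw [← Finset.sum_mul, hRcol, one_mul]
  refine ⟨key, ?_⟩
  rw [Submodule.Quotient.eq]
  refine ⟨fun _ => -1, ?_⟩
  funext j
  simp only [Matrix.mulVecLin_apply, Matrix.sub_mulVec, Matrix.one_mulVec, Matrix.mulVec,
    dotProduct, Pi.sub_apply, mul_neg_one, mul_one]
  have := key j
  simp only [Matrix.transpose_apply] at this
  simp only [Matrix.sub_apply, Matrix.one_apply, Finset.sum_sub_distrib, Matrix.transpose_apply,
    Finset.sum_ite_eq, Finset.mem_univ, if_true, Finset.sum_neg_distrib]
  linarith [this]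
end

section
/- Define the matrix D̂ of size N_A × N_B by D̂(i,l) = 1 if d(a_i) = d(b_l) and 0 otherwise, where a_i = c(a_i)d(a_i) and b_l = d(b_l)c(b_l) are the factorizations of edges of the graphs of A = CD and B = DC through edges of C and D. Then A^G · D̂ = D̂ · B^G, where A^G and B^G are the edge transition matrices; both sides at entry (i,l) equal the number of edges c of the graph of C with d(a_i)·c·d(b_l) an admissible path. -/
open scoped Classical

/-- Edges of the graph of `A = C * D`: composable pairs `(c, d)` with `t(c) = s(d)`. -/
abbrev EdgeA {VB : Type*} {EC ED : Type*} (tC : EC → VB) (sD : ED → VB) : Type _ :=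
  { x : EC × ED // tC x.1 = sD x.2 }

/-- Edges of the graph of `B = D * C`: composable pairs `(d, c)` with `t(d) = s(c)`. -/
abbrev EdgeB {VA : Type*} {EC ED : Type*} (sC : EC → VA) (tD : ED → VA) : Type _ :=
  { x : ED × EC // tD x.1 = sC x.2 }

/-- The edge transition matrix `A^G` of the graph of `A = C*D`: entry `1` iff the terminal
vertex of the first edge equals the source vertex of the second. -/
noncomputable def AG {VA VB : Type*} {EC ED : Type*} (sC : EC → VA) (tC : EC → VB)
    (sD : ED → VB) (tD : ED → VA) :
    Matrix (EdgeA tC sD) (EdgeA tC sD) ℕ :=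
  fun a a' => if tD a.1.2 = sC a'.1.1 then 1 else 0

/-- The edge transition matrix `B^G` of the graph of `B = D*C`. -/
noncomputable def BG {VA VB : Type*} {EC ED : Type*} (sC : EC → VA) (tC : EC → VB)
    (sD : ED → VB) (tD : ED → VA) :
    Matrix (EdgeB sC tD) (EdgeB sC tD) ℕ :=
  fun b b' => if tC b.1.2 = sD b'.1.1 then 1 else 0

/-- The matrix `D̂`: entry `(a, b)` is `1` iff the `D`-component of `a` equals the
`D`-component of `b`. -/
noncomputable def Dhat {VA VB : Type*} {EC ED : Type*} (sC : EC → VA) (tC : EC → VB)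
    (sD : ED → VB) (tD : ED → VA) :
    Matrix (EdgeA tC sD) (EdgeB sC tD) ℕ :=
  fun a b => if a.1.2 = b.1.1 then 1 else 0

section aux
variable {VA VB : Type*} {EC ED : Type*} [Fintype EC] [Fintype ED]
    (sC : EC → VA) (tC : EC → VB) (sD : ED → VB) (tD : ED → VA)

lemma left_entry (a : EdgeA tC sD) (b : EdgeB sC tD) :
    (AG sC tC sD tD * Dhat sC tC sD tD) a b =
      Fintype.card { c : EC // sC c = tD a.1.2 ∧ tC c = sD b.1.1 } := by
  classical
  rw [Matrix.mul_apply]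
  simp only [AG, Dhat, ite_mul, one_mul, zero_mul, ← ite_and]
  rw [Finset.sum_boole]
  rw [← Fintype.card_subtype]
  push_cast
  refine Fintype.card_congr ?_
  refine ⟨fun x => match x with | ⟨⟨⟨c,d⟩,h⟩, h1, h2⟩ => ⟨c, h1.symm, by subst h2; exact h⟩,
    fun c => ⟨⟨(c.1, b.1.1), c.2.2⟩, c.2.1.symm, rfl⟩, ?_, ?_⟩
  · rintro ⟨⟨⟨cc, dd⟩, h⟩, h1, h2⟩
    simp only at h2
    subst h2
    rfl
  · rintro ⟨c, h1, h2⟩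
    rfl

lemma right_entry (a : EdgeA tC sD) (b : EdgeB sC tD) :
    (Dhat sC tC sD tD * BG sC tC sD tD) a b =
      Fintype.card { c : EC // sC c = tD a.1.2 ∧ tC c = sD b.1.1 } := by
  classical
  rw [Matrix.mul_apply]
  simp only [BG, Dhat, ite_mul, one_mul, zero_mul, ← ite_and]
  rw [Finset.sum_boole]
  rw [← Fintype.card_subtype]
  push_cast
  refine Fintype.card_congr ?_
  refine ⟨fun x => match x with | ⟨⟨⟨d,c⟩,h⟩, h1, h2⟩ => ⟨c, by subst h1; exact h.symm, h2⟩,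
    fun c => ⟨⟨(a.1.2, c.1), c.2.1.symm⟩, rfl, c.2.2⟩, ?_, ?_⟩
  · rintro ⟨⟨⟨dd, cc⟩, h⟩, h1, h2⟩
    simp only at h1
    subst h1
    rfl
  · rintro ⟨c, h1, h2⟩
    rfl

end aux

/-- `A^G · D̂ = D̂ · B^G`, and both sides at entry `(a, b)` count the edges `c` of the graph
of `C` making `d(a)·c·d(b)` an admissible path. -/
theorem stmt_10 {VA VB : Type*} {EC ED : Type*} [Fintype EC] [Fintype ED]
    (sC : EC → VA) (tC : EC → VB) (sD : ED → VB) (tD : ED → VA) :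
    AG sC tC sD tD * Dhat sC tC sD tD = Dhat sC tC sD tD * BG sC tC sD tD ∧
    ∀ (a : EdgeA tC sD) (b : EdgeB sC tD),
      (AG sC tC sD tD * Dhat sC tC sD tD) a b =
        Fintype.card { c : EC // sC c = tD a.1.2 ∧ tC c = sD b.1.1 } := by
  refine ⟨?_, left_entry sC tC sD tD⟩
  ext a b
  rw [left_entry, right_entry]
end

section
/- With A = CD and B = DC, let S_A, R_A be the {0,1}-matrices with S_A(i,j) = 1 iff t(a_i) = v_j and R_A(j,i) = 1 iff s(a_i) = v_j (so A = R_A S_A, A^G = S_A R_A), and similarly S_B, R_B for B. Then D̂ · S_B = S_A · C, where D̂ is the edge-matching matrix defined by D̂(i,l) = 1 iff d(a_i) = d(b_l). -/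
open scoped Classical

/-- `D̂ · S_B = S_A · C`, where `S_A` (resp. `S_B`) is the terminal-vertex incidence matrix
of the graph of `A = C*D` (resp. `B = D*C`), `C` is the vertex matrix counting the edges of
`G_C` between two vertices, and `D̂` is the edge-matching matrix `D̂(a,b) = 1` iff
`d(a) = d(b)`. -/
theorem stmt_11 {VA VB : Type*} {EC ED : Type*}
    [Fintype EC] [Fintype ED] [Fintype VA] [Fintype VB]
    (sC : EC → VA) (tC : EC → VB) (sD : ED → VB) (tD : ED → VA)
    (SA : Matrix (EdgeA tC sD) VA ℕ) (SB : Matrix (EdgeB sC tD) VB ℕ)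
    (Dhat : Matrix (EdgeA tC sD) (EdgeB sC tD) ℕ)
    (Cmat : Matrix VA VB ℕ)
    (hSA : ∀ a v, SA a v = if tD a.1.2 = v then 1 else 0)
    (hSB : ∀ b w, SB b w = if tC b.1.2 = w then 1 else 0)
    (hDhat : ∀ a b, Dhat a b = if a.1.2 = b.1.1 then 1 else 0)
    (hC : ∀ v w, Cmat v w = Fintype.card { c : EC // sC c = v ∧ tC c = w }) :
    Dhat * SB = SA * Cmat := by
  ext a w
  simp only [Matrix.mul_apply, hSA, hSB, hDhat, hC, ite_mul, one_mul, zero_mul,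
    Finset.sum_ite_eq, Finset.mem_univ, if_true]
  simp only [← ite_and, Finset.sum_boole, Nat.cast_id]
  rw [← Fintype.card_subtype]
  exact Fintype.card_congr
    { toFun := fun b => ⟨b.1.1.2, ⟨by rw [← b.1.2, ← b.2.1], b.2.2⟩⟩
      invFun := fun c => ⟨⟨⟨a.1.2, c.1⟩, c.2.1.symm⟩, ⟨rfl, c.2.2⟩⟩
      left_inv := fun b => by
        obtain ⟨⟨⟨d, c⟩, h⟩, h1, h2⟩ := b
        cases h1; rfl
      right_inv := fun c => rfl }
end

section
/- For a square {0,1}-matrix A^G obtained as A^G = S_A R_A where A = R_A S_A, the map induced by S_Aᵗ gives an isomorphism of abelian groups ℤ^{N_A}/(id − (A^G)ᵗ)ℤ^{N_A} → ℤ^N/(id − Aᵗ)ℤ^N, with inverse induced by R_Aᵗ. -/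
/-!
Write `f = Sᵗ` and `g = Rᵗ`, so that `Aᵗ = f ∘ g` and `(A^G)ᵗ = g ∘ f`. For any pair of linear
maps `f : M → N`, `g : N → M` the intertwining `f ∘ (id - g ∘ f) = (id - f ∘ g) ∘ f` lets `f` and
`g` descend to the cokernels of `id - g ∘ f` and `id - f ∘ g`, and `g (f m) ≡ m` modulo the range
of `id - g ∘ f` (and symmetrically) makes the induced maps mutually inverse.
-/

namespace LinearMap

variable {R M N : Type*} [Ring R] [AddCommGroup M] [Module R M] [AddCommGroup N] [Module R N]

theorem quotient_mk_apply_eq_mk (h : M →ₗ[R] M) (m : M) :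
    (Submodule.Quotient.mk (h m) : M ⧸ range (id - h)) = Submodule.Quotient.mk m := by
  rw [Submodule.Quotient.eq]
  exact ⟨-m, by simp [neg_add_eq_sub]⟩

theorem range_id_sub_comp_le_comap (f : M →ₗ[R] N) (g : N →ₗ[R] M) :
    range (id - g ∘ₗ f) ≤ (range (id - f ∘ₗ g)).comap f := by
  rintro _ ⟨m, rfl⟩
  exact ⟨f m, by simp⟩

def quotientRangeIdSubCompEquiv (f : M →ₗ[R] N) (g : N →ₗ[R] M) :
    (M ⧸ range (id - g ∘ₗ f)) ≃ₗ[R] (N ⧸ range (id - f ∘ₗ g)) where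
  toLinearMap := Submodule.mapQ _ _ f (range_id_sub_comp_le_comap f g)
  invFun := Submodule.mapQ _ _ g (range_id_sub_comp_le_comap g f)
  left_inv x := by
    induction x using Submodule.Quotient.induction_on with
    | H m => exact quotient_mk_apply_eq_mk (g ∘ₗ f) m
  right_inv y := by
    induction y using Submodule.Quotient.induction_on with
    | H n => exact quotient_mk_apply_eq_mk (f ∘ₗ g) n

end LinearMap

theorem Matrix.mulVecLin_one_sub_transpose_mul {m n α : Type*} [Fintype m] [Fintype n]
    [DecidableEq m] [CommRing α] (X : Matrix m n α) (Y : Matrix n m α) :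
    (1 - (X * Y).transpose).mulVecLin =
      LinearMap.id - Y.transpose.mulVecLin ∘ₗ X.transpose.mulVecLin := by
  rw [Matrix.transpose_mul, ← Matrix.mulVecLin_mul, ← Matrix.mulVecLin_one]
  ext
  simp

theorem stmt_12_general (N K : ℕ) (R : Matrix (Fin N) (Fin K) ℤ) (S : Matrix (Fin K) (Fin N) ℤ)
    (A : Matrix (Fin N) (Fin N) ℤ) (AG : Matrix (Fin K) (Fin K) ℤ)
    (hA : A = R * S) (hAG : AG = S * R) :
    ∃ (φ : ((Fin K → ℤ) ⧸ LinearMap.range (1 - AG.transpose).mulVecLin) →ₗ[ℤ]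
           ((Fin N → ℤ) ⧸ LinearMap.range (1 - A.transpose).mulVecLin))
      (ψ : ((Fin N → ℤ) ⧸ LinearMap.range (1 - A.transpose).mulVecLin) →ₗ[ℤ]
           ((Fin K → ℤ) ⧸ LinearMap.range (1 - AG.transpose).mulVecLin)),
      (∀ v : Fin K → ℤ,
        φ (Submodule.Quotient.mk v) = Submodule.Quotient.mk (S.transpose.mulVecLin v)) ∧
      (∀ w : Fin N → ℤ,
        ψ (Submodule.Quotient.mk w) = Submodule.Quotient.mk (R.transpose.mulVecLin w)) ∧
      φ.comp ψ = LinearMap.id ∧ ψ.comp φ = LinearMap.id := by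
  subst hA hAG
  rw [Matrix.mulVecLin_one_sub_transpose_mul, Matrix.mulVecLin_one_sub_transpose_mul]
  let e := LinearMap.quotientRangeIdSubCompEquiv S.transpose.mulVecLin R.transpose.mulVecLin
  exact ⟨e, e.symm, fun _ => rfl, fun _ => rfl, e.comp_symm, e.symm_comp⟩

/-- For `A = R * S` and `A^G = S * R` (with `R`, `S` nonnegative), the map induced by `Sᵗ`
is an isomorphism of abelian groups
`ℤᴷ/(id - (A^G)ᵗ)ℤᴷ → ℤᴺ/(id - Aᵗ)ℤᴺ`, with inverse induced by `Rᵗ`. -/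
theorem stmt_12 (N K : ℕ) (R : Matrix (Fin N) (Fin K) ℤ) (S : Matrix (Fin K) (Fin N) ℤ)
    (hR : ∀ i k, 0 ≤ R i k) (hS : ∀ k i, 0 ≤ S k i)
    (A : Matrix (Fin N) (Fin N) ℤ) (AG : Matrix (Fin K) (Fin K) ℤ)
    (hA : A = R * S) (hAG : AG = S * R) :
    ∃ (φ : ((Fin K → ℤ) ⧸ LinearMap.range (1 - AG.transpose).mulVecLin) →ₗ[ℤ]
           ((Fin N → ℤ) ⧸ LinearMap.range (1 - A.transpose).mulVecLin))
      (ψ : ((Fin N → ℤ) ⧸ LinearMap.range (1 - A.transpose).mulVecLin) →ₗ[ℤ]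
           ((Fin K → ℤ) ⧸ LinearMap.range (1 - AG.transpose).mulVecLin)),
      (∀ v : Fin K → ℤ,
        φ (Submodule.Quotient.mk v) = Submodule.Quotient.mk (S.transpose.mulVecLin v)) ∧
      (∀ w : Fin N → ℤ,
        ψ (Submodule.Quotient.mk w) = Submodule.Quotient.mk (R.transpose.mulVecLin w)) ∧
      φ.comp ψ = LinearMap.id ∧ ψ.comp φ = LinearMap.id :=
  stmt_12_general N K R S A AG hA hAG
end
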